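/- arXiv:2008.11066 — 2 statements merged into one kernel-verified Lean document; each statement's English description precedes it below -/
import Mathlib

section
/- Derivability versus reversibility: Let C be an adhesive category, α : L ⇀ R a rule, and g : R ⟶ H a match, and suppose g ⇒[α†] f with corule β for some match f : L ⟶ G and rule β : H ⇀ G. Then g is derivable by α if and only if f ⇒[α] g with corule β†. -/
open CategoryTheory Limits

universe v u

variable {C : Type u} [Category.{v} C]

/-- `IsFPBC f₁ f₂ g₁ g₂` states that `(g₁ : X ⟶ W, g₂ : W ⟶ Z)` is a final pullback
complement of the composable pair `(f₁ : X ⟶ Y, f₂ : Y ⟶ Z)`. -/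
structure IsFPBC {X Y Z W : C} (f₁ : X ⟶ Y) (f₂ : Y ⟶ Z) (g₁ : X ⟶ W) (g₂ : W ⟶ Z) :
    Prop where
  isPullback : IsPullback f₁ g₁ f₂ g₂
  final : ∀ {P Q : C} (f₁' : P ⟶ Y) (g₁' : P ⟶ Q) (g₂' : Q ⟶ Z),
      IsPullback f₁' g₁' f₂ g₂' → ∀ p : P ⟶ X, p ≫ f₁ = f₁' →
      ∃! u : Q ⟶ W, u ≫ g₂ = g₂' ∧ g₁' ≫ u = p ≫ g₁

/-- A rule `L ⇀ R` is a span of monomorphisms. -/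
structure Rule (L R : C) where
  K : C
  left : K ⟶ L
  right : K ⟶ R
  mono_left : Mono left
  mono_right : Mono right

/-- The reverse `α† : R ⇀ L` of a rule `α : L ⇀ R`. -/
def Rule.rev {L R : C} (α : Rule L R) : Rule R L :=
  ⟨α.K, α.right, α.left, α.mono_right, α.mono_left⟩

/-- `IsDerivation α f g β`: the comatch `g : R ⟶ H` is derived from the match `f : L ⟶ G`
by the rule `α : L ⇀ R`, with corule `β : G ⇀ H`. -/
def IsDerivation {L R G H : C} (α : Rule L R) (f : L ⟶ G) (g : R ⟶ H) (β : Rule G H) :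
    Prop :=
  ∃ h : α.K ⟶ β.K, Mono h ∧ IsFPBC α.left f h β.left ∧ IsPushout α.right h g β.right

/-- A match `g : R ⟶ H` is derivable by a rule `α : L ⇀ R` if `f ⇒[α] g` for some match `f`. -/
def Derivable {L R H : C} (α : Rule L R) (g : R ⟶ H) : Prop :=
  ∃ (G : C) (f : L ⟶ G) (β : Rule G H), Mono f ∧ IsDerivation α f g β

/-- A gluing of `G₁` and `G₂`: a cospan of monomorphisms. -/
structure Gluing (G₁ G₂ : C) where
  U : C
  i₁ : G₁ ⟶ U
  i₂ : G₂ ⟶ U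
  mono₁ : Mono i₁
  mono₂ : Mono i₂

/-- A gluing is minimal if every monomorphism through which both legs factor is an iso. -/
def Gluing.Minimal {G₁ G₂ : C} (gl : Gluing G₁ G₂) : Prop :=
  ∀ (V : C) (m : V ⟶ gl.U), Mono m →
    (∃ j₁ : G₁ ⟶ V, j₁ ≫ m = gl.i₁) → (∃ j₂ : G₂ ⟶ V, j₂ ≫ m = gl.i₂) → IsIso m

/-- Two gluings are isomorphic if there is an isomorphism of their tips commuting
with the legs. -/
def GluingIso {G₁ G₂ : C} (g h : Gluing G₁ G₂) : Prop :=
  ∃ u : g.U ≅ h.U, g.i₁ ≫ u.hom = h.i₁ ∧ g.i₂ ≫ u.hom = h.i₂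

/-- The set (type) of matches (monomorphisms) from `A` to `B`. -/
abbrev Mchs (A B : C) := {f : A ⟶ B // Mono f}

/-!
A pushout along a monomorphism in an adhesive category is a final pullback complement, and final
pullback complements are unique up to isomorphism. Given `g ⇒[α†] f` with corule `β`,
the square `(α₁, f)` completed by `β` is such a pushout, hence `β` gives the FPBC half of
`f ⇒[α] g`. If `g` is derivable by `α`, its derivation exhibits a pushout complement of
`(α₂, g)`; it is an FPBC, so it agrees with the FPBC `β₁` of `(α₂, g)` given by `g ⇒[α†] f`,
and transporting the pushout along this isomorphism yields the pushout half of `f ⇒[α] g`.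
-/

section FPBC

variable {X Y Z W W' : C} {f₁ : X ⟶ Y} {f₂ : Y ⟶ Z}
  {g₁ : X ⟶ W} {g₂ : W ⟶ Z} {g₁' : X ⟶ W'} {g₂' : W' ⟶ Z}

theorem IsFPBC.exists_lift (F : IsFPBC f₁ f₂ g₁ g₂) (F' : IsFPBC f₁ f₂ g₁' g₂') :
    ∃ u : W' ⟶ W, u ≫ g₂ = g₂' ∧ g₁' ≫ u = g₁ := by
  obtain ⟨u, ⟨hu₂, hu₁⟩, -⟩ := F.final f₁ g₁' g₂' F'.isPullback (𝟙 X) (Category.id_comp _)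
  exact ⟨u, hu₂, hu₁.trans (Category.id_comp _)⟩

theorem IsFPBC.endo_eq_id (F : IsFPBC f₁ f₂ g₁ g₂) {e : W ⟶ W} (he₂ : e ≫ g₂ = g₂)
    (he₁ : g₁ ≫ e = g₁) : e = 𝟙 W := by
  obtain ⟨u, -, hu⟩ := F.final f₁ g₁ g₂ F.isPullback (𝟙 X) (Category.id_comp _)
  rw [Category.id_comp] at hu
  exact (hu e ⟨he₂, he₁⟩).trans (hu (𝟙 W) ⟨Category.id_comp _, Category.comp_id _⟩).symm

theorem IsFPBC.exists_iso (F : IsFPBC f₁ f₂ g₁ g₂) (F' : IsFPBC f₁ f₂ g₁' g₂') :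
    ∃ e : W ≅ W', g₁ ≫ e.hom = g₁' ∧ e.hom ≫ g₂' = g₂ := by
  obtain ⟨u, hu₂, hu₁⟩ := F'.exists_lift F
  obtain ⟨v, hv₂, hv₁⟩ := F.exists_lift F'
  refine ⟨⟨u, v, F.endo_eq_id ?_ ?_, F'.endo_eq_id ?_ ?_⟩, hu₁, hu₂⟩
  · rw [Category.assoc, hv₂, hu₂]
  · rw [← Category.assoc, hu₁, hv₁]
  · rw [Category.assoc, hu₂, hv₂]
  · rw [← Category.assoc, hv₁, hu₁]

end FPBC

namespace CategoryTheory.IsPushout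

variable [Adhesive C] {K L D G : C} {m : K ⟶ L} {h : K ⟶ D}
  {n : L ⟶ G} {d : D ⟶ G} [Mono m]

attribute [local instance] hasPullback_symmetry in
/-- Pulling the pushout square back along `g₂'` gives a pushout (van Kampen), whose leg over `L`
is `g₁'`; as `f₁'` factors through `m`, the cocone `(p ≫ h, pullback.fst d g₂')` descends. -/
theorem exists_lift_of_isPullback (H : IsPushout m h n d) {P Q : C} {f₁' : P ⟶ L}
    {g₁' : P ⟶ Q} {g₂' : Q ⟶ G} (pb : IsPullback f₁' g₁' n g₂') {p : P ⟶ K}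
    (hp : p ≫ m = f₁') : ∃ u : Q ⟶ D, u ≫ d = g₂' ∧ g₁' ≫ u = p ≫ h := by
  have : Mono d := Adhesive.mono_of_isPushout_of_mono_left H
  have pbD := IsPullback.of_hasPullback d g₂'
  obtain ⟨W, f', g', αW, backL, backD, top⟩ :=
    (Adhesive.van_kampen H).exists_cube_filling pb.flip pbD.flip
  have hf'p : f' ≫ p = αW := (cancel_mono m).mp (by rw [Category.assoc, hp, backL.w])
  have hdesc : f' ≫ p ≫ h = g' ≫ pullback.fst d g₂' := by
    rw [← Category.assoc, hf'p, backD.w]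
  refine ⟨top.desc (p ≫ h) (pullback.fst d g₂') hdesc, ?_, top.inl_desc _ _ _⟩
  apply top.hom_ext
  · rw [top.inl_desc_assoc, Category.assoc, ← H.w, reassoc_of% hp, pb.w]
  · rw [top.inr_desc_assoc, pbD.w]

theorem isFPBC (H : IsPushout m h n d) : IsFPBC m n h d := by
  have : Mono d := Adhesive.mono_of_isPushout_of_mono_left H
  refine ⟨Adhesive.isPullback_of_isPushout_of_mono_left H, ?_⟩
  intro P Q f₁' g₁' g₂' pb p hp
  obtain ⟨u, hu₂, hu₁⟩ := H.exists_lift_of_isPullback pb hp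
  exact ⟨u, ⟨hu₂, hu₁⟩, fun u' hu' => (cancel_mono d).mp (hu'.1.trans hu₂.symm)⟩

theorem of_isFPBC {D' : C} {h' : K ⟶ D'} {d' : D' ⟶ G} (H : IsPushout m h' n d')
    (F : IsFPBC m n h d) : IsPushout m h n d := by
  obtain ⟨e, he₁, he₂⟩ := H.isFPBC.exists_iso F
  exact H.of_iso (Iso.refl _) (Iso.refl _) e (Iso.refl _) (by simp) (by simpa using he₁)
    (by simp) (by simpa using he₂.symm)

end CategoryTheory.IsPushout

theorem derivability_iff_reversibility_general [Adhesive C] {L R G H : C}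
    (α : Rule L R) (g : R ⟶ H) (f : L ⟶ G) (β : Rule H G)
    [Mono f]
    (h : IsDerivation α.rev g f β) :
    Derivable α g ↔ IsDerivation α f g β.rev := by
  obtain ⟨k, hk, hFPBC, hPushout⟩ := h
  dsimp only [Rule.rev] at hFPBC hPushout
  have := α.mono_left
  have := α.mono_right
  constructor
  · rintro ⟨_, _, _, -, _, -, -, hPushout'⟩
    exact ⟨k, hk, hPushout.isFPBC, hPushout'.of_isFPBC hFPBC⟩
  · exact fun hDer => ⟨G, f, β.rev, ‹Mono f›, hDer⟩

/-- Derivability versus reversibility. -/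
theorem derivability_iff_reversibility [Adhesive C] {L R G H : C}
    (α : Rule L R) (g : R ⟶ H) (f : L ⟶ G) (β : Rule H G)
    [Mono g] [Mono f]
    (h : IsDerivation α.rev g f β) :
    Derivable α g ↔ IsDerivation α f g β.rev :=
  derivability_iff_reversibility_general α g f β h
end

section
/- Action of the rate matrix on graph observables (the jump formula): Let C be an adhesive category in which every composable pair of monomorphisms has an FPBC. Fix a rule α : L ⇀ R and objects F and G. Let M_R (respectively M_L) be a finite complete set of representatives of the isomorphism classes of minimal gluings of R and F (respectively of L and F), and let RMG ⊆ M_R be the set of those μ = (μ₁ : R ⟶ μ̂, μ₂ : F ⟶ μ̂) whose first leg μ₁ is derivable by α. For each μ ∈ RMG fix a derivation μ₁ ⇒[α†] d_μ with comatch d_μ : L ⟶ S_μ, and for each match f ∈ mchs(L, G) fix a derivation f ⇒[α] α(f) with comatch α(f) : R ⟶ H_f. Assume all the match sets involved are finite. Then, as an identity of integers, Σ_{f ∈ mchs(L, G)} (|mchs(F, H_f)| − |mchs(F, G)|) = Σ_{μ ∈ RMG} |mchs(S_μ, G)| − Σ_{ν ∈ M_L} |mchs(ν̂, G)|, where ν̂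 denotes the codomain (tip) of the minimal gluing ν. -/
open CategoryTheory Limits

universe v u

variable {C : Type u} [Category.{v} C]

/-!
Both sides of the formula count matches into `G` and into the `H_f` through minimal gluings.
In an adhesive category the pushout over the pullback of two matches `a : X₁ ⟶ G`,
`b : X₂ ⟶ G` is a minimal gluing embedded into `G` (Lack–Sobociński), and every minimal gluing
embedded into `G` is of this form; so a pair `(a, b)` factors through exactly one representative
gluing by exactly one match. This gives `|mchs(L, G)| · |mchs(F, G)| = Σ_ν |mchs(ν̂, G)|`, and
for each `f` it identifies `mchs(F, H_f)` with the pairs `(μ, e)` of a representative `μ` and a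
match `e : μ̂ ⟶ H_f` extending the comatch `α(f)` along `μ₁`.

Restricting the pushout square of `f ⇒[α] α(f)` along such an `e` (van Kampen) shows that `μ₁`
is then derivable. For derivable `μ₁` the FPBC square of `μ₁ ⇒[α†] d_μ` is a pushout, since
pushouts along monos are FPBCs and FPBCs are unique; then the pairs `(f, e)` correspond
bijectively to the matches `m : S_μ ⟶ G`. From `(f, e)` one glues `f` with the context of
`f ⇒[α] α(f)` along the pushout square of `μ₁ ⇒[α†] d_μ`; conversely `f = m ∘ d_μ`, and `e` is
glued from `α(f)` and the context map given by finality of the FPBC of `f`. Summing over `f`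
and exchanging the sums gives the formula.
-/

attribute [instance] Rule.mono_left Rule.mono_right Gluing.mono₁ Gluing.mono₂

instance Mchs.mono {A B : C} (f : Mchs A B) : Mono f.1 := f.2

theorem Finite.of_equiv_sigma {α ι : Type*} {β : ι → Type*} [Finite α] (e : α ≃ Σ i, β i)
    (i : ι) : Finite (β i) :=
  Finite.of_injective (e.symm ∘ Sigma.mk i) (e.symm.injective.comp sigma_mk_injective)

noncomputable def Equiv.ofExistsUnique {α β : Type*} (r : α → β → Prop)
    (h₁ : ∀ a, ∃! b, r a b) (h₂ : ∀ b, ∃! a, r a b) : α ≃ β where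
  toFun a := (h₁ a).exists.choose
  invFun b := (h₂ b).exists.choose
  left_inv a := (h₂ _).unique (h₂ _).exists.choose_spec (h₁ a).exists.choose_spec
  right_inv b := (h₁ _).unique (h₁ _).exists.choose_spec (h₂ b).exists.choose_spec

namespace CategoryTheory.IsPullback

variable {P X Y Z : C} {fst : P ⟶ X} {snd : P ⟶ Y} {f : X ⟶ Z} {g : Y ⟶ Z}

theorem comp_mono (h : IsPullback fst snd f g) {Z' : C} (m : Z ⟶ Z') [Mono m] :
    IsPullback fst snd (f ≫ m) (g ≫ m) := by
  simpa using h.paste_vert (IsPullback.of_vert_isIso_mono (fst := g) (snd := 𝟙 _) ⟨by simp⟩)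

theorem of_snd_fac_mono (h : IsPullback fst snd f g) {Y' : C} {snd' : P ⟶ Y'} {θ : Y' ⟶ Y}
    [Mono θ] (hθ : snd' ≫ θ = snd) : IsPullback fst snd' f (θ ≫ g) := by
  simpa using ((IsPullback.of_vert_isIso_mono (snd := 𝟙 _) ⟨by simpa using hθ⟩).paste_vert
    h.flip).flip

end CategoryTheory.IsPullback

namespace IsFPBC

variable {X Y Z W W' : C} {f₁ : X ⟶ Y} {f₂ : Y ⟶ Z} {g₁ : X ⟶ W} {g₂ : W ⟶ Z}

theorem eq_id_of_comp {u : W ⟶ W} (H : IsFPBC f₁ f₂ g₁ g₂) (hu₁ : u ≫ g₂ = g₂)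
    (hu₂ : g₁ ≫ u = g₁) : u = 𝟙 W :=
  (H.final f₁ g₁ g₂ H.isPullback (𝟙 X) (Category.id_comp _)).unique
    ⟨hu₁, by simpa using hu₂⟩ ⟨Category.id_comp _, by simp⟩

theorem exists_iso_s9 {g₁' : X ⟶ W'} {g₂' : W' ⟶ Z} (H : IsFPBC f₁ f₂ g₁ g₂)
    (H' : IsFPBC f₁ f₂ g₁' g₂') : ∃ ψ : W ≅ W', g₁ ≫ ψ.hom = g₁' ∧ ψ.hom ≫ g₂' = g₂ := by
  obtain ⟨u, ⟨hu₁, hu₂⟩, -⟩ := H'.final f₁ g₁ g₂ H.isPullback (𝟙 X) (Category.id_comp _)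
  obtain ⟨v, ⟨hv₁, hv₂⟩, -⟩ := H.final f₁ g₁' g₂' H'.isPullback (𝟙 X) (Category.id_comp _)
  rw [Category.id_comp] at hu₂ hv₂
  refine ⟨⟨u, v, H.eq_id_of_comp ?_ ?_, H'.eq_id_of_comp ?_ ?_⟩, hu₂, hu₁⟩ <;>
    simp [hu₁, hv₁, hu₂, hv₂, reassoc_of% hu₂, reassoc_of% hv₂]

end IsFPBC

section Adhesive

variable [Adhesive C]

theorem CategoryTheory.Adhesive.mono_of_isPullback_of_isPushout {P A B Z Q : C} {a : A ⟶ Z}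
    {b : B ⟶ Z} [Mono a] [Mono b] {p₁ : P ⟶ A} {p₂ : P ⟶ B} (hP : IsPullback p₁ p₂ a b)
    {ja : A ⟶ Q} {jb : B ⟶ Q} (hQ : IsPushout p₁ p₂ ja jb) {c : Q ⟶ Z} (hca : ja ≫ c = a)
    (hcb : jb ≫ c = b) : Mono c := by
  have hQ' : IsPushout (pullback.fst a b) (pullback.snd a b) ja jb :=
    hQ.of_iso hP.isoPullback (Iso.refl _) (Iso.refl _) (Iso.refl _) (by simp) (by simp)
      (by simp) (by simp)
  have : c = hQ'.isoPushout.hom ≫ pushout.desc a b pullback.condition :=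
    hQ'.hom_ext (by rw [hQ'.inl_isoPushout_hom_assoc, pushout.inl_desc, hca])
      (by rw [hQ'.inr_isoPushout_hom_assoc, pushout.inr_desc, hcb])
  rw [this]
  infer_instance

theorem isFPBC_of_isPushout {X Y Z W : C} {f₁ : X ⟶ Y} {f₂ : Y ⟶ Z} {g₁ : X ⟶ W}
    {g₂ : W ⟶ Z} [Mono f₁] (H : IsPushout f₁ g₁ f₂ g₂) : IsFPBC f₁ f₂ g₁ g₂ := by
  have : Mono g₂ := Adhesive.mono_of_isPushout_of_mono_left H
  refine ⟨Adhesive.isPullback_of_isPushout_of_mono_left H, ?_⟩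
  intro P Q f₁' g₁' g₂' hpb p hp
  have : HasPullback f₁' f₁ := hasPullback_symmetry f₁ f₁'
  -- pulling `H` back along `g₂'` gives a pushout whose left leg is an iso, since `f₁'`
  -- factors through the mono `f₁`; hence `g₂'` factors through `g₂`
  obtain ⟨P', f', _, _, hback, -, htop⟩ := (Adhesive.van_kampen H).exists_cube_filling
    hpb.flip (IsPullback.of_hasPullback g₂ g₂').flip
  have : IsIso f' := by
    rw [← hback.isoIsPullback_hom_fst _ _
      (IsPullback.of_horiz_isIso_mono (fst := 𝟙 P) (snd := p) ⟨by simp [hp]⟩)]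
    infer_instance
  have : IsIso (pullback.snd g₂ g₂') := htop.isIso_inr_of_isIso
  refine ⟨inv (pullback.snd g₂ g₂') ≫ pullback.fst g₂ g₂', ⟨by simp [pullback.condition], ?_⟩,
    fun u hu => by rw [← cancel_mono g₂, hu.1]; simp [pullback.condition]⟩
  rw [← cancel_mono g₂]
  simp only [Category.assoc, pullback.condition, IsIso.inv_hom_id_assoc]
  rw [← hpb.w, ← hp, Category.assoc, H.w]

theorem CategoryTheory.IsPushout.exists_restriction {K R D H U : C} {a : K ⟶ R} {h₀ : K ⟶ D}
    {g : R ⟶ H} {b : D ⟶ H} [Mono a] (hpo : IsPushout a h₀ g b) {μ : R ⟶ U} {e : U ⟶ H}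
    [Mono e] (he : μ ≫ e = g) :
    ∃ (D' : C) (h : K ⟶ D') (q : D' ⟶ U) (θ : D' ⟶ D),
      IsPushout a h μ q ∧ h ≫ θ = h₀ ∧ θ ≫ b = q ≫ e := by
  obtain ⟨K', a', h, κ, hκ, hh, hres⟩ := (Adhesive.van_kampen hpo).exists_cube_filling
    (IsPullback.of_vert_isIso_mono (fst := μ) (snd := 𝟙 R) ⟨by simp [he]⟩)
    (IsPullback.of_hasPullback e b)
  have : IsIso κ := hκ.isIso_snd_of_isIso
  refine ⟨pullback e b, inv κ ≫ h, pullback.fst e b, pullback.snd e b,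
    hres.of_iso (asIso κ) (Iso.refl _) (Iso.refl _) (Iso.refl _) ?_ (by simp) (by simp) (by simp),
    by simp [hh.w], pullback.condition.symm⟩
  simpa using hκ.w

theorem Derivable.isPushout {L R U D : C} {α : Rule L R} {μ : R ⟶ U} (hμ : Derivable α μ)
    {k : α.K ⟶ D} {c : D ⟶ U} (hk : IsFPBC α.right μ k c) : IsPushout α.right k μ c := by
  obtain ⟨G, f, β, -, h, -, -, hpo⟩ := hμ
  obtain ⟨ψ, hψ₁, hψ₂⟩ := (isFPBC_of_isPushout hpo).exists_iso_s9 hk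
  exact hpo.of_iso (Iso.refl _) (Iso.refl _) ψ (Iso.refl _) (by simp) (by simpa using hψ₁)
    (by simp) (by simpa using hψ₂.symm)

theorem IsDerivation.derivable_of_fac {L R G H U : C} {α : Rule L R} {f : L ⟶ G} {g : R ⟶ H}
    {β : Rule G H} (hfg : IsDerivation α f g β) {μ : R ⟶ U} {e : U ⟶ H} [Mono e]
    (he : μ ≫ e = g) : Derivable α μ := by
  obtain ⟨h₀, _, -, hpo⟩ := hfg
  obtain ⟨D, h, q, _, hres, hh, -⟩ := hpo.exists_restriction he
  have : Mono h := mono_of_mono_fac hh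
  have : Mono q := Adhesive.mono_of_isPushout_of_mono_left hres
  have hpo' := IsPushout.of_hasPushout α.left h
  have : Mono (pushout.inl α.left h) := Adhesive.mono_of_isPushout_of_mono_right hpo'
  have : Mono (pushout.inr α.left h) := Adhesive.mono_of_isPushout_of_mono_left hpo'
  exact ⟨_, _, ⟨D, pushout.inr α.left h, q, inferInstance, inferInstance⟩, inferInstance, h,
    inferInstance, isFPBC_of_isPushout hpo', hres⟩

end Adhesive

section Gluing

variable {X₁ X₂ G : C}

theorem Gluing.minimal_of_isPushout {gl : Gluing X₁ X₂} {P : C} {p₁ : P ⟶ X₁} {p₂ : P ⟶ X₂}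
    (hpo : IsPushout p₁ p₂ gl.i₁ gl.i₂) : gl.Minimal := by
  rintro V m _ ⟨j₁, hj₁⟩ ⟨j₂, hj₂⟩
  have w : p₁ ≫ j₁ = p₂ ≫ j₂ := by
    rw [← cancel_mono m, Category.assoc, Category.assoc, hj₁, hj₂, hpo.w]
  have : IsSplitEpi m := ⟨⟨hpo.desc j₁ j₂ w, hpo.hom_ext (by simp [hj₁]) (by simp [hj₂])⟩⟩
  exact isIso_of_mono_of_isSplitEpi m

theorem Gluing.Minimal.gluingIso_of_isPushout {gl gl₀ : Gluing X₁ X₂} (hgl : gl.Minimal)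
    {P : C} {p₁ : P ⟶ X₁} {p₂ : P ⟶ X₂} (hpo : IsPushout p₁ p₂ gl₀.i₁ gl₀.i₂) {m : gl.U ⟶ G}
    [Mono m] {c : gl₀.U ⟶ G} [Mono c] (h₁ : gl₀.i₁ ≫ c = gl.i₁ ≫ m)
    (h₂ : gl₀.i₂ ≫ c = gl.i₂ ≫ m) : GluingIso gl₀ gl := by
  have w : p₁ ≫ gl.i₁ = p₂ ≫ gl.i₂ := by
    rw [← cancel_mono m, Category.assoc, Category.assoc, ← h₁, ← h₂, hpo.w_assoc]
  have : Mono (hpo.desc _ _ w) :=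
    mono_of_mono_fac (hpo.hom_ext (by simp [h₁]) (by simp [h₂]) : hpo.desc _ _ w ≫ m = c)
  have : IsIso (hpo.desc _ _ w) :=
    hgl _ _ this ⟨gl₀.i₁, hpo.inl_desc _ _ _⟩ ⟨gl₀.i₂, hpo.inr_desc _ _ _⟩
  exact ⟨asIso (hpo.desc _ _ w), hpo.inl_desc _ _ _, hpo.inr_desc _ _ _⟩

variable [Adhesive C]

theorem exists_gluing_isPushout (a : X₁ ⟶ G) (b : X₂ ⟶ G) [Mono a] [Mono b] :
    ∃ (gl : Gluing X₁ X₂) (P : C) (p₁ : P ⟶ X₁) (p₂ : P ⟶ X₂) (c : gl.U ⟶ G),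
      IsPushout p₁ p₂ gl.i₁ gl.i₂ ∧ Mono c ∧ gl.i₁ ≫ c = a ∧ gl.i₂ ≫ c = b := by
  have hpo := IsPushout.of_hasPushout (pullback.fst a b) (pullback.snd a b)
  exact ⟨⟨_, _, _, Adhesive.mono_of_isPushout_of_mono_right hpo,
    Adhesive.mono_of_isPushout_of_mono_left hpo⟩, _, _, _, pushout.desc a b pullback.condition,
    hpo, inferInstance, pushout.inl_desc _ _ _, pushout.inr_desc _ _ _⟩

theorem Gluing.Minimal.hom_ext {gl : Gluing X₁ X₂} (hgl : gl.Minimal) {T : C}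
    {x y : gl.U ⟶ T} (h₁ : gl.i₁ ≫ x = gl.i₁ ≫ y) (h₂ : gl.i₂ ≫ x = gl.i₂ ≫ y) : x = y := by
  obtain ⟨gl₀, P, p₁, p₂, c, hpo, _, hc₁, hc₂⟩ := exists_gluing_isPushout gl.i₁ gl.i₂
  obtain ⟨u, hu₁, hu₂⟩ := hgl.gluingIso_of_isPushout hpo (m := 𝟙 _) (by simpa) (by simpa)
  rw [← cancel_epi u.hom]
  exact hpo.hom_ext (by simp [reassoc_of% hu₁, h₁]) (by simp [reassoc_of% hu₂, h₂])

abbrev Extensions {R U H : C} (μ : R ⟶ U) (g : R ⟶ H) := {e : Mchs U H // μ ≫ e.1 = g}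

structure IsMinimalGluingRepresentatives {ι : Type*} (M : ι → Gluing X₁ X₂) : Prop where
  minimal : ∀ i, (M i).Minimal
  existsUnique : ∀ gl : Gluing X₁ X₂, gl.Minimal → ∃! i, GluingIso gl (M i)

namespace IsMinimalGluingRepresentatives

variable {ι : Type*} {M : ι → Gluing X₁ X₂} (hM : IsMinimalGluingRepresentatives M)
include hM

theorem existsUnique_factorization (a : Mchs X₁ G) (b : Mchs X₂ G) :
    ∃! x : Σ i, Mchs (M i).U G, (M x.1).i₁ ≫ x.2.1 = a.1 ∧ (M x.1).i₂ ≫ x.2.1 = b.1 := by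
  obtain ⟨gl₀, P, p₁, p₂, c, hpo, _, hc₁, hc₂⟩ := exists_gluing_isPushout a.1 b.1
  obtain ⟨i, ⟨v, hv₁, hv₂⟩, huniq⟩ := hM.existsUnique gl₀ (Gluing.minimal_of_isPushout hpo)
  refine ⟨⟨i, v.inv ≫ c, mono_comp _ _⟩, ⟨by simp [← hv₁, hc₁], by simp [← hv₂, hc₂]⟩, ?_⟩
  rintro ⟨j, e, _⟩ ⟨he₁ : (M j).i₁ ≫ e = a.1, he₂ : (M j).i₂ ≫ e = b.1⟩
  obtain rfl : j = i :=
    huniq j ((hM.minimal j).gluingIso_of_isPushout hpo (hc₁.trans he₁.symm) (hc₂.trans he₂.symm))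
  congr
  exact (hM.minimal j).hom_ext (by rw [he₁, ← hv₁]; simp [hc₁]) (by rw [he₂, ← hv₂]; simp [hc₂])

noncomputable def sigmaMchsEquiv (G : C) : (Σ i, Mchs (M i).U G) ≃ Mchs X₁ G × Mchs X₂ G :=
  Equiv.ofBijective
    (fun x => (⟨(M x.1).i₁ ≫ x.2.1, inferInstance⟩, ⟨(M x.1).i₂ ≫ x.2.1, inferInstance⟩))
    ((Function.bijective_iff_existsUnique _).2 fun p => by
      simpa [Prod.ext_iff, Subtype.ext_iff] using hM.existsUnique_factorization p.1 p.2)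

noncomputable def mchsEquivSigmaExtensions (a : X₁ ⟶ G) [Mono a] :
    Mchs X₂ G ≃ Σ i, Extensions (M i).i₁ a :=
  (Equiv.ofBijective
    (fun x : Σ i, Extensions (M i).i₁ a => ⟨(M x.1).i₂ ≫ x.2.1.1, inferInstance⟩)
    ((Function.bijective_iff_existsUnique _).2 fun b => by
      obtain ⟨⟨i, e⟩, ⟨he₁, he₂⟩, huniq⟩ := hM.existsUnique_factorization ⟨a, ‹_›⟩ b
      refine ⟨⟨i, e, he₁⟩, Subtype.ext he₂, ?_⟩
      rintro ⟨j, e', he'₁⟩ he'₂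
      cases huniq ⟨j, e'⟩ ⟨he'₁, congrArg Subtype.val he'₂⟩
      rfl)).symm

theorem card_mul_card_eq_sum [Fintype ι] [Finite (Mchs X₁ G)] [Finite (Mchs X₂ G)] :
    Nat.card (Mchs X₁ G) * Nat.card (Mchs X₂ G) = ∑ i, Nat.card (Mchs (M i).U G) := by
  have := Finite.of_equiv_sigma (hM.sigmaMchsEquiv G).symm
  rw [← Nat.card_prod, ← Nat.card_congr (hM.sigmaMchsEquiv G), Nat.card_sigma]

theorem finite_extensions [Finite (Mchs X₂ G)] (a : X₁ ⟶ G) [Mono a] (i : ι) :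
    Finite (Extensions (M i).i₁ a) :=
  Finite.of_equiv_sigma (hM.mchsEquivSigmaExtensions a) i

theorem card_eq_sum_card_extensions [Fintype ι] [Finite (Mchs X₂ G)] (a : X₁ ⟶ G) [Mono a] :
    Nat.card (Mchs X₂ G) = ∑ i, Nat.card (Extensions (M i).i₁ a) := by
  have := hM.finite_extensions a
  rw [Nat.card_congr (hM.mchsEquivSigmaExtensions a), Nat.card_sigma]

end IsMinimalGluingRepresentatives

end Gluing

def Rule.MapsTo {A B A' B' : C} (ρ : Rule A B) (σ : Rule A' B') (a : A ⟶ A') (b : B ⟶ B') :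
    Prop :=
  ∃ θ : ρ.K ⟶ σ.K, θ ≫ σ.left = ρ.left ≫ a ∧ θ ≫ σ.right = ρ.right ≫ b

section Correspondence

variable [Adhesive C] {L R G U S : C} {α : Rule L R} {H : Mchs L G → C} {g : ∀ f, R ⟶ H f}
  {β : ∀ f, Rule G (H f)} {μ : R ⟶ U} {d : L ⟶ S} {γ : Rule U S} {k : α.K ⟶ γ.K}

theorem existsUnique_mchs_of_extension (hβ : ∀ f, IsDerivation α f.1 (g f) (β f))
    (hkμ : IsPushout α.right k μ γ.left) (hkd : IsPushout α.left k d γ.right)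
    (x : Σ f, Extensions μ (g f)) :
    ∃! m : Mchs S G, d ≫ m.1 = x.1.1 ∧ γ.rev.MapsTo (β x.1) m.1 x.2.1.1 := by
  obtain ⟨f, ⟨e, _⟩, he⟩ := x
  obtain ⟨h₀, _, hFP, hpo⟩ := hβ f
  obtain ⟨D, h, q, θ, hres, hh, hθ⟩ := hpo.exists_restriction he
  -- the contexts of both pushout complements of `μ` compare by finality
  obtain ⟨v, ⟨hv₁, hv₂⟩, -⟩ := (isFPBC_of_isPushout hres).final α.right k γ.left
    (Adhesive.isPullback_of_isPushout_of_mono_left hkμ) (𝟙 _) (Category.id_comp _)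
  have hvθ : (v ≫ θ) ≫ (β f).right = γ.left ≫ e := by
    rw [Category.assoc, hθ, ← hv₁, Category.assoc]
  have hkvθ : k ≫ v ≫ θ = h₀ := by rw [← Category.assoc, hv₂, Category.id_comp, hh]
  have : Mono (v ≫ θ) := mono_of_mono_fac hvθ
  have w : α.left ≫ f.1 = k ≫ (v ≫ θ) ≫ (β f).left := by
    rw [hFP.isPullback.w, ← hkvθ, Category.assoc]
  have : Mono (hkd.desc f.1 _ w) := Adhesive.mono_of_isPullback_of_isPushout
    (hFP.isPullback.of_snd_fac_mono hkvθ) hkd (hkd.inl_desc _ _ _) (hkd.inr_desc _ _ _)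
  refine ⟨⟨_, this⟩, ⟨hkd.inl_desc _ _ _, v ≫ θ, (hkd.inr_desc _ _ _).symm, hvθ⟩, ?_⟩
  rintro ⟨m, _⟩ ⟨hm, (θ' : γ.K ⟶ (β f).K), (hθ'₁ : θ' ≫ _ = γ.right ≫ m),
    (hθ'₂ : θ' ≫ _ = γ.left ≫ e)⟩
  obtain rfl : θ' = v ≫ θ := by rw [← cancel_mono (β f).right, hvθ, hθ'₂]
  exact Subtype.ext (hkd.hom_ext (by simpa using hm) (by simpa using hθ'₁.symm))

theorem existsUnique_extension_of_mchs (hβ : ∀ f, IsDerivation α f.1 (g f) (β f))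
    (hkμ : IsPushout α.right k μ γ.left) (hkd : IsPushout α.left k d γ.right) [Mono d]
    (m : Mchs S G) :
    ∃! x : Σ f, Extensions μ (g f), d ≫ m.1 = x.1.1 ∧ γ.rev.MapsTo (β x.1) m.1 x.2.1.1 := by
  set f : Mchs L G := ⟨d ≫ m.1, inferInstance⟩
  obtain ⟨h₀, _, hFP, hpo⟩ := hβ f
  have : Mono (g f) := Adhesive.mono_of_isPushout_of_mono_right hpo
  obtain ⟨θ, ⟨hθ₁, hθ₂⟩, -⟩ := hFP.final α.left k (γ.right ≫ m.1)
    ((Adhesive.isPullback_of_isPushout_of_mono_left hkd).comp_mono m.1) (𝟙 _)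
    (Category.id_comp _)
  rw [Category.id_comp] at hθ₂
  have : Mono θ := mono_of_mono_fac hθ₁
  have w : α.right ≫ g f = k ≫ θ ≫ (β f).right := by rw [hpo.w, ← hθ₂, Category.assoc]
  have : Mono (hkμ.desc (g f) _ w) := Adhesive.mono_of_isPullback_of_isPushout
    ((Adhesive.isPullback_of_isPushout_of_mono_left hpo).of_snd_fac_mono hθ₂) hkμ
    (hkμ.inl_desc _ _ _) (hkμ.inr_desc _ _ _)
  refine ⟨⟨f, ⟨_, this⟩, hkμ.inl_desc _ _ _⟩, ⟨rfl, θ, hθ₁, (hkμ.inr_desc _ _ _).symm⟩, ?_⟩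
  rintro ⟨f', ⟨e', _⟩, he'⟩ ⟨hf', θ', hθ'₁, hθ'₂⟩
  obtain rfl : f' = f := Subtype.ext hf'.symm
  change γ.K ⟶ (β f).K at θ'
  change θ' ≫ _ = γ.right ≫ m.1 at hθ'₁
  change θ' ≫ _ = γ.left ≫ e' at hθ'₂
  obtain rfl : θ' = θ := by rw [← cancel_mono (β f).left, hθ₁, hθ'₁]
  obtain rfl : e' = hkμ.desc (g f) _ w :=
    hkμ.hom_ext (by simpa using he') (by simpa using hθ'₂.symm)
  rfl

theorem sum_card_extensions_eq_card [Fintype (Mchs L G)] [∀ f, Finite (Extensions μ (g f))]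
    (hβ : ∀ f, IsDerivation α f.1 (g f) (β f)) (hkμ : IsPushout α.right k μ γ.left)
    (hkd : IsPushout α.left k d γ.right) [Mono d] :
    ∑ f, Nat.card (Extensions μ (g f)) = Nat.card (Mchs S G) := by
  rw [← Nat.card_sigma, Nat.card_congr (Equiv.ofExistsUnique _
    (existsUnique_mchs_of_extension hβ hkμ hkd) (existsUnique_extension_of_mchs hβ hkμ hkd))]

end Correspondence

open scoped Classical in
theorem jump_formula_general [Adhesive C]
    {L R F G : C} (α : Rule L R)
    {ι : Type} [Fintype ι] (M : ι → Gluing R F)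
    (hmin : ∀ i, (M i).Minimal)
    (hrep : ∀ gl : Gluing R F, gl.Minimal → ∃! i : ι, GluingIso gl (M i))
    {κ : Type} [Fintype κ] (N : κ → Gluing L F)
    (hminL : ∀ j, (N j).Minimal)
    (hrepL : ∀ gl : Gluing L F, gl.Minimal → ∃! j : κ, GluingIso gl (N j))
    (S : ∀ i : ι, Derivable α (M i).i₁ → C)
    (d : ∀ (i : ι) (h : Derivable α (M i).i₁), L ⟶ S i h)
    (hd : ∀ (i : ι) (h : Derivable α (M i).i₁),
      Mono (d i h) ∧ ∃ γ : Rule (M i).U (S i h), IsDerivation α.rev (M i).i₁ (d i h) γ)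
    [Fintype (Mchs L G)]
    (Hf : Mchs L G → C)
    (af : ∀ f : Mchs L G, R ⟶ Hf f)
    (haf : ∀ f : Mchs L G, Mono (af f) ∧ ∃ β : Rule G (Hf f), IsDerivation α f.1 (af f) β)
    (hfin1 : ∀ f : Mchs L G, Finite (Mchs F (Hf f)))
    (hfin3 : Finite (Mchs F G)) :
    ∑ f : Mchs L G, ((Nat.card (Mchs F (Hf f)) : ℤ) - (Nat.card (Mchs F G) : ℤ)) =
      (∑ i : ι, (if h : Derivable α (M i).i₁ then (Nat.card (Mchs (S i h) G) : ℤ) else 0))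
        - ∑ j : κ, (Nat.card (Mchs (N j).U G) : ℤ) := by
  choose β hβ using fun f => (haf f).2
  have := fun f => (haf f).1
  have hM : IsMinimalGluingRepresentatives M := ⟨hmin, hrep⟩
  have := fun f => have := hfin1 f; hM.finite_extensions (af f)
  have hS (i) : ∑ f, Nat.card (Extensions (M i).i₁ (af f)) =
      if h : Derivable α (M i).i₁ then Nat.card (Mchs (S i h) G) else 0 := by
    split_ifs with h
    · obtain ⟨_, γ, k, -, hFP, hkd⟩ := hd i h
      exact sum_card_extensions_eq_card hβ (h.isPushout hFP) hkd
    · refine Finset.sum_eq_zero fun f _ => ?_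
      have : IsEmpty (Extensions (M i).i₁ (af f)) :=
        ⟨fun e => h ((hβ f).derivable_of_fac e.2)⟩
      exact Nat.card_of_isEmpty
  have hH : ∑ f, Nat.card (Mchs F (Hf f)) =
      ∑ i, if h : Derivable α (M i).i₁ then Nat.card (Mchs (S i h) G) else 0 := by
    simp only [fun f => have := hfin1 f; hM.card_eq_sum_card_extensions (af f)]
    rw [Finset.sum_comm]
    exact Finset.sum_congr rfl fun i _ => hS i
  have hG := (IsMinimalGluingRepresentatives.mk hminL hrepL).card_mul_card_eq_sum (G := G)
  rw [Finset.sum_sub_distrib, Finset.sum_const, Finset.card_univ, ← Nat.card_eq_fintype_card,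
    nsmul_eq_mul, ← Nat.cast_sum, hH, ← Nat.cast_mul, hG]
  push_cast
  congr 1
  exact Finset.sum_congr rfl fun i _ => by split_ifs <;> simp

open scoped Classical in
/-- Action of the rate matrix on graph observables (the jump formula). -/
theorem jump_formula [Adhesive C]
    (hFPBC : ∀ {X Y Z : C} (f₁ : X ⟶ Y) (f₂ : Y ⟶ Z), Mono f₁ → Mono f₂ →
      ∃ (W : C) (g₁ : X ⟶ W) (g₂ : W ⟶ Z), IsFPBC f₁ f₂ g₁ g₂)
    {L R F G : C} (α : Rule L R)
    {ι : Type} [Fintype ι] (M : ι → Gluing R F)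
    (hmin : ∀ i, (M i).Minimal)
    (hrep : ∀ gl : Gluing R F, gl.Minimal → ∃! i : ι, GluingIso gl (M i))
    {κ : Type} [Fintype κ] (N : κ → Gluing L F)
    (hminL : ∀ j, (N j).Minimal)
    (hrepL : ∀ gl : Gluing L F, gl.Minimal → ∃! j : κ, GluingIso gl (N j))
    (S : ∀ i : ι, Derivable α (M i).i₁ → C)
    (d : ∀ (i : ι) (h : Derivable α (M i).i₁), L ⟶ S i h)
    (hd : ∀ (i : ι) (h : Derivable α (M i).i₁),
      Mono (d i h) ∧ ∃ γ : Rule (M i).U (S i h), IsDerivation α.rev (M i).i₁ (d i h) γ)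
    [Fintype (Mchs L G)]
    (Hf : Mchs L G → C)
    (af : ∀ f : Mchs L G, R ⟶ Hf f)
    (haf : ∀ f : Mchs L G, Mono (af f) ∧ ∃ β : Rule G (Hf f), IsDerivation α f.1 (af f) β)
    (hfin1 : ∀ f : Mchs L G, Finite (Mchs F (Hf f)))
    (hfin2 : ∀ (i : ι) (h : Derivable α (M i).i₁), Finite (Mchs (S i h) G))
    (hfin3 : Finite (Mchs F G))
    (hfin4 : ∀ j : κ, Finite (Mchs (N j).U G)) :
    ∑ f : Mchs L G, ((Nat.card (Mchs F (Hf f)) : ℤ) - (Nat.card (Mchs F G) : ℤ)) =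
      (∑ i : ι, (if h : Derivable α (M i).i₁ then (Nat.card (Mchs (S i h) G) : ℤ) else 0))
        - ∑ j : κ, (Nat.card (Mchs (N j).U G) : ℤ) :=
  jump_formula_general α M hmin hrep N hminL hrepL S d hd Hf af haf hfin1 hfin3
end
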